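/- Fix n ≥ 1 relays with path gains a_k > 0 (source A to relay k) and b_k > 0 (relay k to source B), and let G_1, …, G_n, H_1, …, H_n be mutually independent unit-rate exponential fading powers. Let K* be the (almost surely unique) index maximizing min(a_k G_k, b_k H_k) over k = 1, …, n. Let τ_f, τ_b ∈ (0,1) with τ_f + τ_b = 1, let μ > 0, and let 0 < m < (2/3)·min{(1+μ)τ_f, (1+1/μ)τ_b}. For γ > 1 define I_1(γ) = log(1 + γ ∑_k a_k G_k), I_2(γ) = log(1 + γ ∑_k b_k H_k), Ĩ_1(γ) = log(1 + γ a_{K*} G_{K*}), Ĩ_2(γ) = log(1 + γ b_{K*} H_{K*}), and the outage probability ε(γ) = P[ {(2τ_f/3)·min(I_1, Ĩ_1, Ĩ_2) < (m/(1+μ)) log γ} ∪ {(2τ_b/3)·min(I_2, Ĩ_1, Ĩ_2) < (m/(1+1/μ)) log γ} ]. Then limsup_{γ→∞} log ε(γ)/log γ ≤ −n·(1 − 3m / (2·min{(1+μ)τ_f, (1+1/μ)τ_b})); that is, network coding with collaborative reception and an optimally selected broadcast relay achieves diversity gain at least n·(1 − 3m/(2 min{(1+μ)τ_f, (1+1/μ)τ_b}))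 at multiplexing gain m. -/

import Mathlib

open MeasureTheory ProbabilityTheory Filter

/-- A real random variable `g` is unit-rate exponential (w.r.t. measure `ℙ`) if
`ℙ[g > x] = e^{-x}` for all `x ≥ 0`. -/
def IsUnitExp {Ω : Type*} [MeasureSpace Ω] (g : Ω → ℝ) : Prop :=
  ∀ x : ℝ, 0 ≤ x → ℙ {ω | x < g ω} = ENNReal.ofReal (Real.exp (-x))

/-!
Off a null set all fading powers are positive, so the collaborative mutual information `I_i`
dominates `Ĩ_i` and never binds. Outage in either direction then forces the weaker broadcast
link of `K*`, hence by the choice of `K*` the weaker of the two links of every relay, to have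
gain below `γ^(r-1)`, where `r = 3m / (2 min{(1+μ)τ_f, (1+1/μ)τ_b})`. Since
`P[a g < t] ≤ t / a` and the links are independent, this has probability `O(γ^((r-1)n))`.
Conversely, `G_k ≤ 1/γ` for all `k` forces forward outage for large `γ`, so `ε(γ) ≥ (2γ)^(-n)`;
this polynomial lower bound keeps `log ε / log γ` bounded below.
-/

namespace IsUnitExp

variable {Ω : Type*} [MeasureSpace Ω] [IsProbabilityMeasure (ℙ : Measure Ω)] {g : Ω → ℝ}

lemma measure_le (hg : IsUnitExp g) (hm : Measurable g) {x : ℝ} (hx : 0 ≤ x) :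
    ℙ {ω | g ω ≤ x} = ENNReal.ofReal (1 - Real.exp (-x)) := by
  have hcompl : {ω | g ω ≤ x} = {ω | x < g ω}ᶜ := by ext; simp
  rw [hcompl, prob_compl_eq_one_sub (measurableSet_lt measurable_const hm), hg x hx,
    ← ENNReal.ofReal_one, ← ENNReal.ofReal_sub _ (Real.exp_nonneg _)]

lemma ae_pos (hg : IsUnitExp g) (hm : Measurable g) : ∀ᵐ ω, 0 < g ω := by
  simpa [ae_iff] using hg.measure_le hm le_rfl

lemma measure_lt_le (hg : IsUnitExp g) (hm : Measurable g) {x : ℝ} (hx : 0 ≤ x) :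
    ℙ {ω | g ω < x} ≤ ENNReal.ofReal x :=
  calc ℙ {ω | g ω < x} ≤ ℙ {ω | g ω ≤ x} :=
        measure_mono (Set.ofPred_subset_ofPred.mpr fun _ => le_of_lt)
    _ = ENNReal.ofReal (1 - Real.exp (-x)) := hg.measure_le hm hx
    _ ≤ ENNReal.ofReal x := ENNReal.ofReal_le_ofReal (by linarith [Real.add_one_le_exp (-x)])

lemma measure_mul_lt_le (hg : IsUnitExp g) (hm : Measurable g) {a t : ℝ} (ha : 0 < a)
    (ht : 0 ≤ t) : ℙ {ω | a * g ω < t} ≤ ENNReal.ofReal (t / a) := by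
  simpa only [← lt_div_iff₀' ha] using hg.measure_lt_le hm (div_nonneg ht ha.le)

lemma ofReal_half_le_measure_le (hg : IsUnitExp g) (hm : Measurable g) {x : ℝ} (hx₀ : 0 ≤ x)
    (hx₁ : x ≤ 1) : ENNReal.ofReal (x / 2) ≤ ℙ {ω | g ω ≤ x} := by
  rw [hg.measure_le hm hx₀]
  refine ENNReal.ofReal_le_ofReal ?_
  have : (1 + x) * Real.exp (-x) ≤ 1 := by
    calc (1 + x) * Real.exp (-x) ≤ Real.exp x * Real.exp (-x) := by
          gcongr; linarith [Real.add_one_le_exp x]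
      _ = 1 := by rw [← Real.exp_add, add_neg_cancel, Real.exp_zero]
  nlinarith [Real.exp_pos (-x)]

end IsUnitExp

section Independence

variable {Ω ι β : Type*} [MeasurableSpace Ω] [MeasurableSpace β] [Fintype ι]
  {μ : Measure Ω} [IsProbabilityMeasure μ]

/- Sort the outcomes by a choice `φ k` of an alternative that holds at each `k`: each class is an
intersection of independent events, and summing over `φ` expands the product. -/
lemma measure_forall_mem_or_mem_le_prod {X Y : ι → Ω → β} (hXY : iIndepFun (Sum.elim X Y) μ)
    {s t : ι → Set β} (hs : ∀ k, MeasurableSet (s k)) (ht : ∀ k, MeasurableSet (t k)) :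
    μ {ω | ∀ k, X k ω ∈ s k ∨ Y k ω ∈ t k} ≤ ∏ k, (μ (X k ⁻¹' s k) + μ (Y k ⁻¹' t k)) := by
  classical
  let u : (ι → Bool) → ι ⊕ ι → Set β := fun φ =>
    Sum.elim (fun k => if φ k then s k else Set.univ) (fun k => if φ k then Set.univ else t k)
  have hcover : {ω | ∀ k, X k ω ∈ s k ∨ Y k ω ∈ t k}
      ⊆ ⋃ φ, ⋂ i, Sum.elim X Y i ⁻¹' u φ i := by
    intro ω hω
    refine Set.mem_iUnion.mpr ⟨fun k => decide (X k ω ∈ s k), Set.mem_iInter.mpr ?_⟩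
    rintro (k | k) <;> by_cases hk : X k ω ∈ s k <;> simp [u, hk, (hω k).resolve_left]
  have hprod (φ : ι → Bool) : μ (⋂ i, Sum.elim X Y i ⁻¹' u φ i)
      = ∏ k, if φ k then μ (X k ⁻¹' s k) else μ (Y k ⁻¹' t k) := by
    rw [hXY.meas_iInter fun i => ⟨u φ i, ?_, rfl⟩, Fintype.prod_sum_type,
      ← Finset.prod_mul_distrib]
    · refine Finset.prod_congr rfl fun k _ => ?_
      by_cases hk : φ k <;> simp [u, hk]
    · rcases i with k | k <;> by_cases hk : φ k <;> simp [u, hk, hs, ht]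
  calc μ {ω | ∀ k, X k ω ∈ s k ∨ Y k ω ∈ t k}
      ≤ ∑ φ, μ (⋂ i, Sum.elim X Y i ⁻¹' u φ i) :=
        (measure_mono hcover).trans (measure_iUnion_fintype_le _ _)
    _ = ∏ k, (μ (X k ⁻¹' s k) + μ (Y k ⁻¹' t k)) := by
        simp_rw [hprod]
        rw [← Fintype.prod_sum fun k (j : Bool) => if j then μ (X k ⁻¹' s k) else μ (Y k ⁻¹' t k)]
        simp only [Fintype.sum_bool, if_true, Bool.false_eq_true, if_false]

end Independence

open Real in
/-- `c = 2τ/3` is the time share of the direction, `s` the total gain seen by the collaborating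
relays and `x`, `y` the gains of the broadcasting relay to the two sources, so the three
logarithms are `I_i`, `Ĩ_1`, `Ĩ_2`. -/
def DirectionalOutage (c R γ s x y : ℝ) : Prop :=
  c * min (log (1 + γ * s)) (min (log (1 + γ * x)) (log (1 + γ * y))) < R * log γ

section Rates

open Real

lemma min_log_one_add_mul {γ s x y : ℝ} (hγ : 0 ≤ γ) (hx : 0 ≤ x) (hy : 0 ≤ y)
    (hs : min x y ≤ s) :
    min (log (1 + γ * s)) (min (log (1 + γ * x)) (log (1 + γ * y)))
      = log (1 + γ * min x y) := by
  have hmono : MonotoneOn (fun u => log (1 + γ * u)) (Set.Ici 0) := fun u hu v _ huv =>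
    log_le_log (by have : (0 : ℝ) ≤ u := hu; positivity) (by gcongr)
  have hxy : min (log (1 + γ * x)) (log (1 + γ * y)) = log (1 + γ * min x y) := by
    rcases le_total x y with h | h
    · rw [min_eq_left h, min_eq_left (hmono hx hy h)]
    · rw [min_eq_right h, min_eq_right (hmono hy hx h)]
  rw [hxy, min_eq_right (hmono (le_min hx hy) ((le_min hx hy).trans hs) hs)]

lemma lt_rpow_sub_one_of_log_one_add_mul_lt {γ u ρ : ℝ} (hγ : 0 < γ) (hu : 0 ≤ u)
    (h : log (1 + γ * u) < ρ * log γ) : u < γ ^ (ρ - 1) := by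
  rw [← log_rpow hγ, log_lt_log_iff (by positivity) (by positivity)] at h
  rw [rpow_sub_one hγ.ne', lt_div_iff₀ hγ]
  linarith

lemma DirectionalOutage.min_lt_rpow {c R r γ s x y : ℝ} (h : DirectionalOutage c R γ s x y)
    (hγ : 1 < γ) (hc : 0 < c) (hR : R / c ≤ r) (hx : 0 ≤ x) (hy : 0 ≤ y) (hs : min x y ≤ s) :
    min x y < γ ^ (r - 1) := by
  unfold DirectionalOutage at h
  rw [min_log_one_add_mul (by linarith) hx hy hs] at h
  refine lt_rpow_sub_one_of_log_one_add_mul_lt (by linarith) (le_min hx hy) ?_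
  calc log (1 + γ * min x y) < R / c * log γ := by
        rw [div_mul_eq_mul_div, lt_div_iff₀ hc]; linarith
    _ ≤ r * log γ := by gcongr; exact (log_pos hγ).le

lemma directionalOutage_of_le_div {c R A γ s x y : ℝ} (hγ : 0 < γ) (hc : 0 ≤ c) (hx : 0 ≤ x)
    (hxA : x ≤ A / γ) (hA : c * log (1 + A) < R * log γ) : DirectionalOutage c R γ s x y :=
  calc c * min (log (1 + γ * s)) (min (log (1 + γ * x)) (log (1 + γ * y)))
      ≤ c * log (1 + γ * x) := by gcongr; exact (min_le_right _ _).trans (min_le_left _ _)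
    _ ≤ c * log (1 + A) := by
        gcongr
        rwa [le_div_iff₀' hγ] at hxA
    _ < R * log γ := hA

lemma limsup_log_div_log_le {ε : ℝ → ℝ} {c C q d : ℝ} (hc : 0 < c) (hC : 0 < C)
    (hlow : ∀ᶠ γ in atTop, c * γ ^ (-q) ≤ ε γ) (hup : ∀ᶠ γ in atTop, ε γ ≤ C * γ ^ d) :
    limsup (fun γ => log (ε γ) / log γ) atTop ≤ d := by
  -- `hlow` is not optional: in `ℝ` the `limsup` of a function unbounded below is junk (`0`).
  have hlog_rpow {K p γ : ℝ} (hK : 0 < K) (hγ : 1 < γ) :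
      log (K * γ ^ p) / log γ = log K / log γ + p := by
    have := log_pos hγ
    rw [log_mul hK.ne' (by positivity), log_rpow (by linarith)]
    field_simp
  have htends {K p : ℝ} :
      Tendsto (fun γ => log K / log γ + p) atTop (nhds p) := by
    simpa using (tendsto_const_nhds.div_atTop tendsto_log_atTop).add (tendsto_const_nhds (x := p))
  have hratio_le : ∀ᶠ γ in atTop, log (ε γ) / log γ ≤ log C / log γ + d := by
    filter_upwards [hlow, hup, eventually_gt_atTop 1] with γ hl hu hγ
    rw [← hlog_rpow hC hγ]
    gcongr
    · exact (log_pos hγ).le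
    · exact lt_of_lt_of_le (by have := hγ.le; positivity) hl
  have hratio_ge : ∀ᶠ γ in atTop, -q - 1 ≤ log (ε γ) / log γ := by
    filter_upwards [hlow, eventually_gt_atTop 1,
      htends.eventually (eventually_gt_nhds (show -q - 1 < -q by linarith))] with γ hl hγ hK
    rw [← hlog_rpow hc hγ] at hK
    refine hK.le.trans ?_
    gcongr
    exact (log_pos hγ).le
  calc limsup (fun γ => log (ε γ) / log γ) atTop
      ≤ limsup (fun γ => log C / log γ + d) atTop :=
        limsup_le_limsup hratio_le (isCoboundedUnder_le_of_eventually_le _ hratio_ge)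
          htends.isBoundedUnder_le
    _ = d := htends.limsup_eq

end Rates

section Relays

variable {Ω ι : Type*} [MeasureSpace Ω] [IsProbabilityMeasure (ℙ : Measure Ω)] [Fintype ι]
  {a b : ι → ℝ} {G H : ι → Ω → ℝ}

lemma measure_forall_min_mul_lt_le (ha : ∀ k, 0 < a k) (hb : ∀ k, 0 < b k)
    (hGm : ∀ k, Measurable (G k)) (hHm : ∀ k, Measurable (H k))
    (hGH : iIndepFun (Sum.elim G H) ℙ) (hG : ∀ k, IsUnitExp (G k)) (hH : ∀ k, IsUnitExp (H k))
    {t : ℝ} (ht : 0 ≤ t) :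
    ℙ {ω | ∀ k, min (a k * G k ω) (b k * H k ω) < t}
      ≤ ENNReal.ofReal (t ^ Fintype.card ι * ∏ k, ((a k)⁻¹ + (b k)⁻¹)) := by
  simp_rw [min_lt_iff]
  calc ℙ {ω | ∀ k, a k * G k ω < t ∨ b k * H k ω < t}
      ≤ ∏ k, (ℙ {ω | a k * G k ω < t} + ℙ {ω | b k * H k ω < t}) :=
        measure_forall_mem_or_mem_le_prod hGH (s := fun k => {x | a k * x < t})
          (t := fun k => {x | b k * x < t})
          (fun _ => measurableSet_lt (by fun_prop) measurable_const)
          (fun _ => measurableSet_lt (by fun_prop) measurable_const)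
    _ ≤ ∏ k, ENNReal.ofReal (t * ((a k)⁻¹ + (b k)⁻¹)) := by
        gcongr with k
        rw [mul_add, ENNReal.ofReal_add (by have := ha k; positivity) (by have := hb k; positivity)]
        gcongr
        · simpa [div_eq_mul_inv] using (hG k).measure_mul_lt_le (hGm k) (ha k) ht
        · simpa [div_eq_mul_inv] using (hH k).measure_mul_lt_le (hHm k) (hb k) ht
    _ = ENNReal.ofReal (t ^ Fintype.card ι * ∏ k, ((a k)⁻¹ + (b k)⁻¹)) := by
        rw [← ENNReal.ofReal_prod_of_nonneg fun k _ => by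
          have := ha k; have := hb k; positivity, Finset.prod_mul_distrib, Finset.prod_const,
          Finset.card_univ]

lemma ofReal_pow_le_measure_forall_le (hGm : ∀ k, Measurable (G k)) (hGi : iIndepFun G ℙ)
    (hG : ∀ k, IsUnitExp (G k)) {x : ℝ} (hx₀ : 0 ≤ x) (hx₁ : x ≤ 1) :
    ENNReal.ofReal ((x / 2) ^ Fintype.card ι) ≤ ℙ {ω | ∀ k, G k ω ≤ x} := by
  rw [Set.ofPred_forall, hGi.meas_iInter (s := fun k => {ω | G k ω ≤ x})
      fun k => ⟨Set.Iic x, measurableSet_Iic, rfl⟩,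
    ENNReal.ofReal_pow (by positivity), ← Finset.card_univ, ← Finset.prod_const]
  gcongr with k
  exact (hG k).ofReal_half_le_measure_le (hGm k) hx₀ hx₁

end Relays

def ncOutage {Ω ι : Type*} [Fintype ι] (a b : ι → ℝ) (G H : ι → Ω → ℝ) (K : Ω → ι)
    (c₁ R₁ c₂ R₂ γ : ℝ) : Set Ω :=
  {ω | DirectionalOutage c₁ R₁ γ (∑ k, a k * G k ω) (a (K ω) * G (K ω) ω) (b (K ω) * H (K ω) ω) ∨
    DirectionalOutage c₂ R₂ γ (∑ k, b k * H k ω) (a (K ω) * G (K ω) ω) (b (K ω) * H (K ω) ω)}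

section Outage

variable {Ω ι : Type*} [MeasureSpace Ω] [IsProbabilityMeasure (ℙ : Measure Ω)] [Fintype ι]
  {a b : ι → ℝ} {G H : ι → Ω → ℝ} {K : Ω → ι}

lemma measure_ncOutage_le (ha : ∀ k, 0 < a k) (hb : ∀ k, 0 < b k)
    (hGm : ∀ k, Measurable (G k)) (hHm : ∀ k, Measurable (H k))
    (hGH : iIndepFun (Sum.elim G H) ℙ) (hG : ∀ k, IsUnitExp (G k)) (hH : ∀ k, IsUnitExp (H k))
    (hK : ∀ ω k, min (a k * G k ω) (b k * H k ω)
      ≤ min (a (K ω) * G (K ω) ω) (b (K ω) * H (K ω) ω))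
    {c₁ R₁ c₂ R₂ r γ : ℝ} (hc₁ : 0 < c₁) (hc₂ : 0 < c₂) (hR₁ : R₁ / c₁ ≤ r) (hR₂ : R₂ / c₂ ≤ r)
    (hγ : 1 < γ) :
    ℙ (ncOutage a b G H K c₁ R₁ c₂ R₂ γ)
      ≤ ENNReal.ofReal ((∏ k, ((a k)⁻¹ + (b k)⁻¹)) * γ ^ ((r - 1) * Fintype.card ι)) := by
  have hpos : ∀ᵐ ω, ∀ k, 0 < G k ω ∧ 0 < H k ω :=
    ae_all_iff.mpr fun k => ((hG k).ae_pos (hGm k)).and ((hH k).ae_pos (hHm k))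
  rw [mul_comm, Real.rpow_mul_natCast (by linarith)]
  refine (measure_mono_ae ?_).trans
    (measure_forall_min_mul_lt_le ha hb hGm hHm hGH hG hH (by positivity))
  filter_upwards [hpos] with ω hω hout k
  have hGK := mul_pos (ha (K ω)) (hω (K ω)).1
  have hHK := mul_pos (hb (K ω)) (hω (K ω)).2
  refine (hK ω k).trans_lt ?_
  rcases hout with hfwd | hbwd
  · refine hfwd.min_lt_rpow hγ hc₁ hR₁ hGK.le hHK.le ((min_le_left _ _).trans ?_)
    exact Finset.single_le_sum (f := fun k => a k * G k ω)
      (fun k _ => (mul_pos (ha k) (hω k).1).le) (Finset.mem_univ _)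
  · refine hbwd.min_lt_rpow hγ hc₂ hR₂ hGK.le hHK.le ((min_le_right _ _).trans ?_)
    exact Finset.single_le_sum (f := fun k => b k * H k ω)
      (fun k _ => (mul_pos (hb k) (hω k).2).le) (Finset.mem_univ _)

lemma ofReal_le_measure_ncOutage (ha : ∀ k, 0 ≤ a k) (hGm : ∀ k, Measurable (G k))
    (hGi : iIndepFun G ℙ) (hG : ∀ k, IsUnitExp (G k)) {c₁ R₁ c₂ R₂ γ : ℝ} (hc₁ : 0 ≤ c₁)
    (hγ : 1 ≤ γ) (hrate : c₁ * Real.log (1 + ∑ k, a k) < R₁ * Real.log γ) :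
    ENNReal.ofReal ((2 ^ Fintype.card ι)⁻¹ * γ ^ (-(Fintype.card ι : ℝ)))
      ≤ ℙ (ncOutage a b G H K c₁ R₁ c₂ R₂ γ) := by
  have hγ₀ : 0 < γ := by linarith
  have hpow : (2 ^ Fintype.card ι)⁻¹ * γ ^ (-(Fintype.card ι : ℝ))
      = (γ⁻¹ / 2) ^ Fintype.card ι := by
    rw [Real.rpow_neg hγ₀.le, Real.rpow_natCast, div_eq_mul_inv, mul_pow, inv_pow, inv_pow,
      mul_comm]
  rw [hpow]
  refine (ofReal_pow_le_measure_forall_le hGm hGi hG (by positivity)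
    (inv_le_one_of_one_le₀ hγ)).trans (measure_mono_ae ?_)
  filter_upwards [ae_all_iff.mpr fun k => (hG k).ae_pos (hGm k)] with ω hω hsmall
  refine Or.inl (directionalOutage_of_le_div hγ₀ hc₁ (mul_nonneg (ha _) (hω _).le) ?_ hrate)
  calc a (K ω) * G (K ω) ω ≤ a (K ω) / γ := by
        rw [div_eq_mul_inv]; exact mul_le_mul_of_nonneg_left (hsmall _) (ha _)
    _ ≤ (∑ k, a k) / γ := by
        gcongr; exact Finset.single_le_sum (fun k _ => ha k) (Finset.mem_univ _)

end Outage

theorem nc_optimal_broadcast_relay_dmt_general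
    {Ω : Type*} [MeasureSpace Ω] [IsProbabilityMeasure (ℙ : Measure Ω)]
    (n : ℕ) (a b : Fin n → ℝ) (G H : Fin n → Ω → ℝ)
    (ha : ∀ k, 0 < a k) (hb : ∀ k, 0 < b k)
    (hGmeas : ∀ k, Measurable (G k)) (hHmeas : ∀ k, Measurable (H k))
    (hindep : iIndepFun (Sum.elim G H) ℙ)
    (hGexp : ∀ k, IsUnitExp (G k)) (hHexp : ∀ k, IsUnitExp (H k))
    (K : Ω → Fin n)
    (hK : ∀ ω k, min (a k * G k ω) (b k * H k ω)
            ≤ min (a (K ω) * G (K ω) ω) (b (K ω) * H (K ω) ω))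
    (τf τb μ m : ℝ)
    (hτf : 0 < τf ∧ τf < 1) (hτb : 0 < τb ∧ τb < 1)
    (hμ : 0 < μ)
    (hm : 0 < m) :
    limsup (fun γ : ℝ =>
        Real.log (ℙ {ω |
            (2 * τf / 3) * min (Real.log (1 + γ * ∑ k, a k * G k ω))
                (min (Real.log (1 + γ * (a (K ω) * G (K ω) ω)))
                     (Real.log (1 + γ * (b (K ω) * H (K ω) ω))))
              < (m / (1 + μ)) * Real.log γ ∨
            (2 * τb / 3) * min (Real.log (1 + γ * ∑ k, b k * H k ω))
                (min (Real.log (1 + γ * (a (K ω) * G (K ω) ω)))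
                     (Real.log (1 + γ * (b (K ω) * H (K ω) ω))))
              < (m / (1 + 1/μ)) * Real.log γ}).toReal / Real.log γ) atTop
      ≤ -((n : ℝ) * (1 - 3 * m / (2 * min ((1 + μ) * τf) ((1 + 1/μ) * τb)))) := by
  obtain ⟨hτf, -⟩ := hτf
  obtain ⟨hτb, -⟩ := hτb
  set M := min ((1 + μ) * τf) ((1 + 1/μ) * τb)
  have hfwd : m / (1 + μ) / (2 * τf / 3) ≤ 3 * m / (2 * M) := by
    rw [show m / (1 + μ) / (2 * τf / 3) = 3 * m / (2 * ((1 + μ) * τf)) by field_simp]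
    gcongr; exact min_le_left _ _
  have hbwd : m / (1 + 1/μ) / (2 * τb / 3) ≤ 3 * m / (2 * M) := by
    rw [show m / (1 + 1/μ) / (2 * τb / 3) = 3 * m / (2 * ((1 + 1/μ) * τb)) by field_simp]
    gcongr; exact min_le_right _ _
  change limsup (fun γ => Real.log (ℙ (ncOutage a b G H K (2 * τf / 3) (m / (1 + μ))
    (2 * τb / 3) (m / (1 + 1/μ)) γ)).toReal / Real.log γ) atTop ≤ _
  have hGi : iIndepFun G ℙ := Sum.elim_comp_inl G H ▸ hindep.precomp (g := Sum.inl) Sum.inl_injective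
  have hC : 0 < ∏ k, ((a k)⁻¹ + (b k)⁻¹) :=
    Finset.prod_pos fun k _ => by have := ha k; have := hb k; positivity
  refine (limsup_log_div_log_le (c := (2 ^ Fintype.card (Fin n))⁻¹) (q := Fintype.card (Fin n))
    (d := (3 * m / (2 * M) - 1) * Fintype.card (Fin n)) (by positivity) hC ?_ ?_).trans_eq
    (by simp only [Fintype.card_fin]; ring)
  · filter_upwards [eventually_ge_atTop 1, Real.tendsto_log_atTop.eventually_gt_atTop
      (2 * τf / 3 * Real.log (1 + ∑ k, a k) / (m / (1 + μ)))] with γ hγ hlog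
    rw [div_lt_iff₀ (by positivity), mul_comm (Real.log γ)] at hlog
    exact (ENNReal.ofReal_le_iff_le_toReal (measure_ne_top _ _)).mp <|
      ofReal_le_measure_ncOutage (fun k => (ha k).le) hGmeas hGi hGexp (by positivity) hγ hlog
  · filter_upwards [eventually_gt_atTop 1] with γ hγ
    exact ENNReal.toReal_le_of_le_ofReal (by positivity) <|
      measure_ncOutage_le ha hb hGmeas hHmeas hindep hGexp hHexp hK (by positivity)
        (by positivity) hfwd hbwd hγ

/-- diversity-multiplexing tradeoff of network coding with collaborative
reception and an optimally selected broadcast relay `K*` (maximizing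
`min(a_k G_k, b_k H_k)`): the bidirectional outage probability with
`I_1 = log(1 + γ ∑ a_k G_k)`, `I_2 = log(1 + γ ∑ b_k H_k)`,
`Ĩ_1 = log(1 + γ a_{K*} G_{K*})`, `Ĩ_2 = log(1 + γ b_{K*} H_{K*})` satisfies
`limsup_{γ→∞} log ε(γ)/log γ ≤ −n(1 − 3m/(2 min{(1+μ)τ_f, (1+1/μ)τ_b}))`. -/
theorem nc_optimal_broadcast_relay_dmt
    {Ω : Type*} [MeasureSpace Ω] [IsProbabilityMeasure (ℙ : Measure Ω)]
    (n : ℕ) (hn : 1 ≤ n) (a b : Fin n → ℝ) (G H : Fin n → Ω → ℝ)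
    (ha : ∀ k, 0 < a k) (hb : ∀ k, 0 < b k)
    (hGmeas : ∀ k, Measurable (G k)) (hHmeas : ∀ k, Measurable (H k))
    (hindep : iIndepFun (Sum.elim G H) ℙ)
    (hGexp : ∀ k, IsUnitExp (G k)) (hHexp : ∀ k, IsUnitExp (H k))
    (K : Ω → Fin n) (hKmeas : Measurable K)
    (hK : ∀ ω k, min (a k * G k ω) (b k * H k ω)
            ≤ min (a (K ω) * G (K ω) ω) (b (K ω) * H (K ω) ω))
    (τf τb μ m : ℝ)
    (hτf : 0 < τf ∧ τf < 1) (hτb : 0 < τb ∧ τb < 1) (hτ : τf + τb = 1)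
    (hμ : 0 < μ)
    (hm : 0 < m) (hm' : m < (2/3) * min ((1 + μ) * τf) ((1 + 1/μ) * τb)) :
    limsup (fun γ : ℝ =>
        Real.log (ℙ {ω |
            (2 * τf / 3) * min (Real.log (1 + γ * ∑ k, a k * G k ω))
                (min (Real.log (1 + γ * (a (K ω) * G (K ω) ω)))
                     (Real.log (1 + γ * (b (K ω) * H (K ω) ω))))
              < (m / (1 + μ)) * Real.log γ ∨
            (2 * τb / 3) * min (Real.log (1 + γ * ∑ k, b k * H k ω))
                (min (Real.log (1 + γ * (a (K ω) * G (K ω) ω)))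
                     (Real.log (1 + γ * (b (K ω) * H (K ω) ω))))
              < (m / (1 + 1/μ)) * Real.log γ}).toReal / Real.log γ) atTop
      ≤ -((n : ℝ) * (1 - 3 * m / (2 * min ((1 + μ) * τf) ((1 + 1/μ) * τb)))) :=
  nc_optimal_broadcast_relay_dmt_general n a b G H ha hb hGmeas hHmeas hindep hGexp hHexp K hK τf τb
    μ m hτf hτb hμ hm
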